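/- arXiv:2405.15116 — 2 statements merged into one kernel-verified Lean document; each statement's English description precedes it below -/
import Mathlib

section
/- In a real inner product space, let $K$ be convex, let $g^\star \in H$ be a target with $\inf_{x \in K} \|x - g^\star\|$ attained at $s \in K$ with $\|s - g^\star\|^2 = \varepsilon$, let $w \in H$, and let $p \in K$ minimize distance to $w$ over $K$. Then $\|p - g^\star\|^2 \le \|w - g^\star\|^2 - \|p - w\|^2 + 2\varepsilon + 2\sqrt{\varepsilon}\,\|w - g^\star\| + 2\sqrt{\varepsilon}\,\|p - s\|$. -/
/-!
Since `K` is convex, the nearest point `p` to `w` satisfies the variational inequality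
`⟪w - p, s - p⟫ ≤ 0`, which gives the Pythagorean inequality `‖p - s‖² + ‖p - w‖² ≤ ‖w - s‖²`.
Then `‖p - g⋆‖² ≤ (‖p - s‖ + √ε)²` and `‖w - s‖ ≤ ‖w - g⋆‖ + √ε`, and expanding the squares
gives the bound.
-/

open RealInnerProductSpace

section

variable {F : Type*} [NormedAddCommGroup F] [InnerProductSpace ℝ F] {K : Set F} {p s w : F}

theorem Convex.real_inner_sub_nonpos_of_isMinOn (hK : Convex ℝ K) (hp : p ∈ K)
    (hmin : IsMinOn (‖· - w‖) K p) (hs : s ∈ K) : ⟪w - p, s - p⟫ ≤ 0 := by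
  have hleast : IsLeast (Set.range fun x : K ↦ ‖w - x‖) ‖w - p‖ := by
    refine ⟨⟨⟨p, hp⟩, rfl⟩, ?_⟩
    rintro _ ⟨x, rfl⟩
    simpa only [norm_sub_rev w] using isMinOn_iff.mp hmin x x.2
  exact (norm_eq_iInf_iff_real_inner_le_zero hK hp).mp hleast.csInf_eq.symm s hs

theorem Convex.sq_norm_sub_add_sq_norm_sub_le_of_isMinOn (hK : Convex ℝ K) (hp : p ∈ K)
    (hmin : IsMinOn (‖· - w‖) K p) (hs : s ∈ K) :
    ‖p - s‖ ^ 2 + ‖p - w‖ ^ 2 ≤ ‖w - s‖ ^ 2 := by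
  have hinner := hK.real_inner_sub_nonpos_of_isMinOn hp hmin hs
  have hexpand : ‖w - s‖ ^ 2 = ‖w - p‖ ^ 2 - 2 * ⟪w - p, s - p⟫ + ‖s - p‖ ^ 2 := by
    rw [← norm_sub_sq_real, sub_sub_sub_cancel_right]
  rw [hexpand, norm_sub_rev p s, norm_sub_rev p w]
  linarith

end

theorem stmt_8_general {H : Type*} [NormedAddCommGroup H] [InnerProductSpace ℝ H]
    (K : Set H) (hK : Convex ℝ K)
    (gstar : H) (s : H) (hs : s ∈ K)
    (ε : ℝ) (hε : ‖s - gstar‖ ^ 2 = ε)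
    (w : H) (p : H) (hp : p ∈ K)
    (hmin : ∀ x ∈ K, ‖p - w‖ ≤ ‖x - w‖) :
    ‖p - gstar‖ ^ 2 ≤ ‖w - gstar‖ ^ 2 - ‖p - w‖ ^ 2 + 2 * ε
      + 2 * Real.sqrt ε * ‖w - gstar‖ + 2 * Real.sqrt ε * ‖p - s‖ := by
  subst hε
  rw [Real.sqrt_sq (norm_nonneg _)]
  have hpyth := hK.sq_norm_sub_add_sq_norm_sub_le_of_isMinOn hp (isMinOn_iff.mpr hmin) hs
  have hps : ‖p - gstar‖ ≤ ‖p - s‖ + ‖s - gstar‖ := norm_sub_le_norm_sub_add_norm_sub p s gstar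
  have hws : ‖w - s‖ ≤ ‖w - gstar‖ + ‖s - gstar‖ := by
    simpa only [norm_sub_rev gstar s] using norm_sub_le_norm_sub_add_norm_sub w gstar s
  calc ‖p - gstar‖ ^ 2 ≤ (‖p - s‖ + ‖s - gstar‖) ^ 2 := by gcongr
    _ = ‖p - s‖ ^ 2 + 2 * ‖s - gstar‖ * ‖p - s‖ + ‖s - gstar‖ ^ 2 := by ring
    _ ≤ ‖w - s‖ ^ 2 - ‖p - w‖ ^ 2 + 2 * ‖s - gstar‖ * ‖p - s‖ + ‖s - gstar‖ ^ 2 := by linarith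
    _ ≤ (‖w - gstar‖ + ‖s - gstar‖) ^ 2 - ‖p - w‖ ^ 2 + 2 * ‖s - gstar‖ * ‖p - s‖
          + ‖s - gstar‖ ^ 2 := by gcongr
    _ = _ := by ring

theorem stmt_8 {H : Type*} [NormedAddCommGroup H] [InnerProductSpace ℝ H]
    (K : Set H) (hK : Convex ℝ K)
    (gstar : H) (s : H) (hs : s ∈ K)
    (hsmin : ∀ x ∈ K, ‖s - gstar‖ ≤ ‖x - gstar‖)
    (ε : ℝ) (hε : ‖s - gstar‖ ^ 2 = ε)
    (w : H) (p : H) (hp : p ∈ K)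
    (hmin : ∀ x ∈ K, ‖p - w‖ ≤ ‖x - w‖) :
    ‖p - gstar‖ ^ 2 ≤ ‖w - gstar‖ ^ 2 - ‖p - w‖ ^ 2 + 2 * ε
      + 2 * Real.sqrt ε * ‖w - gstar‖ + 2 * Real.sqrt ε * ‖p - s‖ :=
  stmt_8_general K hK gstar s hs ε hε w p hp hmin
end

section
/- In a real inner product space with convex $K$, target $g^\star \in K$, weak model $w$, and projection $p$ of $w$ onto $K$: if the misfit satisfies $\|p - w\|^2 \ge (1 - \alpha)\,\|w - g^\star\|^2$ for some $\alpha \in [0,1]$, then $\|p - g^\star\|^2 \le \alpha\,\|w - g^\star\|^2$. -/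
/-!
The projection `p` of `w` onto the convex set `K` sees every point of `K` at an obtuse angle
from `w`, which gives the Pythagorean inequality `‖w - p‖² + ‖p - g⋆‖² ≤ ‖w - g⋆‖²`;
subtracting the misfit bound leaves `‖p - g⋆‖² ≤ α ‖w - g⋆‖²`.
-/

open scoped RealInnerProductSpace

section

variable {H : Type*} [NormedAddCommGroup H] [InnerProductSpace ℝ H]

theorem real_inner_sub_le_zero_of_forall_norm_sub_le {K : Set H} (hK : Convex ℝ K) {w p : H}
    (hp : p ∈ K) (hmin : ∀ x ∈ K, ‖p - w‖ ≤ ‖x - w‖) : ∀ x ∈ K, ⟪w - p, x - p⟫ ≤ 0 := by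
  have : Nonempty K := ⟨⟨p, hp⟩⟩
  refine (norm_eq_iInf_iff_real_inner_le_zero hK hp).mp (le_antisymm ?_ ?_)
  · exact le_ciInf fun x => by simpa only [norm_sub_rev w] using hmin x x.2
  · exact ciInf_le ⟨0, Set.forall_mem_range.2 fun _ => norm_nonneg _⟩ (⟨p, hp⟩ : K)

theorem norm_sub_sq_add_norm_sub_sq_le_of_real_inner_le_zero {w p g : H}
    (h : ⟪w - p, g - p⟫ ≤ 0) : ‖w - p‖ ^ 2 + ‖p - g‖ ^ 2 ≤ ‖w - g‖ ^ 2 := by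
  have hsplit : ‖w - g‖ ^ 2 = ‖w - p‖ ^ 2 - 2 * ⟪w - p, g - p⟫ + ‖p - g‖ ^ 2 := by
    rw [norm_sub_rev p, ← norm_sub_sq_real, sub_sub_sub_cancel_right]
  linarith

end

theorem stmt_16_general {H : Type*} [NormedAddCommGroup H] [InnerProductSpace ℝ H]
    (K : Set H) (hK : Convex ℝ K)
    (gstar : H) (hg : gstar ∈ K)
    (w : H) (p : H) (hp : p ∈ K)
    (hmin : ∀ x ∈ K, ‖p - w‖ ≤ ‖x - w‖)
    (α : ℝ)
    (hmisfit : (1 - α) * ‖w - gstar‖ ^ 2 ≤ ‖p - w‖ ^ 2) :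
    ‖p - gstar‖ ^ 2 ≤ α * ‖w - gstar‖ ^ 2 := by
  have hpythag := norm_sub_sq_add_norm_sub_sq_le_of_real_inner_le_zero
    (real_inner_sub_le_zero_of_forall_norm_sub_le hK hp hmin gstar hg)
  rw [norm_sub_rev p w] at hmisfit
  linarith

theorem stmt_16 {H : Type*} [NormedAddCommGroup H] [InnerProductSpace ℝ H]
    (K : Set H) (hK : Convex ℝ K)
    (gstar : H) (hg : gstar ∈ K)
    (w : H) (p : H) (hp : p ∈ K)
    (hmin : ∀ x ∈ K, ‖p - w‖ ≤ ‖x - w‖)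
    (α : ℝ) (hα0 : 0 ≤ α) (hα1 : α ≤ 1)
    (hmisfit : (1 - α) * ‖w - gstar‖ ^ 2 ≤ ‖p - w‖ ^ 2) :
    ‖p - gstar‖ ^ 2 ≤ α * ‖w - gstar‖ ^ 2 :=
  stmt_16_general K hK gstar hg w p hp hmin α hmisfit
end
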